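/- For n×n×p tensors 𝒜, ℬ, the sets of invertible tubular eigenvalues of 𝒜*ℬ and ℬ*𝒜 coincide. -/
import Mathlib


open Matrix Complex Finset Kronecker
open scoped ComplexOrder

/-- The `p × p` circulant matrix with first column `v`. -/
noncomputable def circ (p : ℕ) (v : Fin p → ℂ) : Matrix (Fin p) (Fin p) ℂ :=
  Matrix.of fun j k => v (j - k)

/-- The normalized (unitary) DFT matrix of order `p`, with `ω = exp(-2πi/p)`. -/
noncomputable def Fp (p : ℕ) : Matrix (Fin p) (Fin p) ℂ :=
  Matrix.of fun j k =>
    Complex.exp (-(2 * Real.pi * Complex.I * (j.val * k.val)) / p) / (Real.sqrt p : ℂ)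

/-- Block circulant matrix of a third-order tensor given by its frontal slices. -/
noncomputable def bcirc {n m p : ℕ} (X : Fin p → Matrix (Fin n) (Fin m) ℂ) :
    Matrix (Fin p × Fin n) (Fin p × Fin m) ℂ :=
  Matrix.of fun jr kc => X (jr.1 - kc.1) jr.2 kc.2

/-- Block circulant matrix of an `n × 1 × p` tensor (slices viewed as vectors). -/
noncomputable def bcircV {n p : ℕ} (X : Fin p → Fin n → ℂ) :
    Matrix (Fin p × Fin n) (Fin p) ℂ :=
  Matrix.of fun jr k => X (jr.1 - k) jr.2

/-- Block diagonal matrix (square-block index first). -/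
noncomputable def blockDiagMat {n m p : ℕ} (D : Fin p → Matrix (Fin n) (Fin m) ℂ) :
    Matrix (Fin p × Fin n) (Fin p × Fin m) ℂ :=
  Matrix.of fun jr kc => if jr.1 = kc.1 then D jr.1 jr.2 kc.2 else 0

/-- Block diagonal matrix whose blocks are column vectors. -/
noncomputable def blockDiagVec {n p : ℕ} (x : Fin p → Fin n → ℂ) :
    Matrix (Fin p × Fin n) (Fin p) ℂ :=
  Matrix.of fun jr k => if jr.1 = k then x k jr.2 else 0

/-- The T-product of two third-order tensors (slicewise cyclic convolution). -/
noncomputable def tmul {n m l p : ℕ} (A : Fin p → Matrix (Fin n) (Fin m) ℂ)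
    (B : Fin p → Matrix (Fin m) (Fin l) ℂ) : Fin p → Matrix (Fin n) (Fin l) ℂ :=
  fun i => ∑ j, A (i - j) * B j

/-- The identity tensor: first frontal slice is `I_n`, the others are zero. -/
noncomputable def tId (n p : ℕ) [NeZero p] : Fin p → Matrix (Fin n) (Fin n) ℂ :=
  fun i => if i = 0 then 1 else 0

/-- Conjugate T-transpose of a tensor. -/
noncomputable def tH {n m p : ℕ} (X : Fin p → Matrix (Fin n) (Fin m) ℂ) :
    Fin p → Matrix (Fin m) (Fin n) ℂ :=
  fun i => (X (-i))ᴴ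

/-- The tubular tensor `𝒳ᴴ * 𝒴` for `n × 1 × p` tensors `𝒳, 𝒴`. -/
noncomputable def xHy {n p : ℕ} (X Y : Fin p → Fin n → ℂ) : Fin p → ℂ :=
  fun i => ∑ j, star (X (j - i)) ⬝ᵥ Y j

/-- The tubular tensor `𝒳ᴴ * 𝒳` for an `n × 1 × p` tensor `𝒳`. -/
noncomputable def xHx {n p : ℕ} (X : Fin p → Fin n → ℂ) : Fin p → ℂ := xHy X X

/-- T-linear independence of a family of `n × 1 × p` tensors
(coefficients are tubular tensors acting via the T-product). -/
def TLinIndep {n p k : ℕ} (X : Fin k → Fin p → Fin n → ℂ) : Prop :=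
  ∀ c : Fin k → Fin p → ℂ,
    (∀ i : Fin p, ∑ j, ∑ t, c j t • X j (i - t) = 0) → ∀ j, c j = 0

/-- `[λ]` is a tubular eigenvalue of the `n × n × p` tensor `𝒜`:
`𝒜 * 𝒳 = 𝒳 * [λ]` for some eigentensor `𝒳` with `𝒳ᴴ * 𝒳` invertible. -/
def IsTubEig {n p : ℕ} (A : Fin p → Matrix (Fin n) (Fin n) ℂ) (lam : Fin p → ℂ) : Prop :=
  ∃ X : Fin p → Fin n → ℂ,
    (∀ i, ∑ t, (A (i - t)).mulVec (X t) = ∑ t, lam t • X (i - t)) ∧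
    IsUnit (circ p (xHx X))
noncomputable def tmulV {n m p : ℕ} (B : Fin p → Matrix (Fin n) (Fin m) ℂ)
    (X : Fin p → Fin m → ℂ) : Fin p → Fin n → ℂ :=
  fun i => ∑ t, (B (i - t)).mulVec (X t)

lemma bcirc_tmul {n m l p : ℕ} (A : Fin p → Matrix (Fin n) (Fin m) ℂ)
    (B : Fin p → Matrix (Fin m) (Fin l) ℂ) :
    bcirc (tmul A B) = bcirc A * bcirc B := by
  ext ⟨j, r⟩ ⟨k, c⟩
  haveI : NeZero p := ⟨(Fin.pos j).ne'⟩
  simp only [bcirc, tmul, Matrix.mul_apply, Matrix.of_apply, Finset.sum_apply,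
    Matrix.sum_apply, Fintype.sum_prod_type]
  exact Fintype.sum_equiv (Equiv.addRight k) _ _ fun t => by
    simp only [Equiv.coe_addRight]
    have h1 : j - k - t = j - (t + k) := by abel
    have h2 : t + k - k = t := by abel
    rw [h1, h2]

lemma bcircV_tmulV {n m p : ℕ} (B : Fin p → Matrix (Fin n) (Fin m) ℂ)
    (X : Fin p → Fin m → ℂ) :
    bcircV (tmulV B X) = bcirc B * bcircV X := by
  ext ⟨j, r⟩ k
  haveI : NeZero p := ⟨(Fin.pos j).ne'⟩
  simp only [bcircV, bcirc, tmulV, Matrix.mul_apply, Matrix.of_apply, Matrix.mulVec,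
    dotProduct, Finset.sum_apply, Fintype.sum_prod_type]
  exact Fintype.sum_equiv (Equiv.addRight k) _ _ fun t => by
    simp only [Equiv.coe_addRight]
    have h1 : j - k - t = j - (t + k) := by abel
    have h2 : t + k - k = t := by abel
    rw [h1, h2]

lemma bcircV_smul {n p : ℕ} (lam : Fin p → ℂ) (X : Fin p → Fin n → ℂ) :
    bcircV (fun i => ∑ t, lam t • X (i - t)) = bcircV X * circ p lam := by
  ext ⟨j, r⟩ k
  haveI : NeZero p := ⟨(Fin.pos j).ne'⟩
  simp only [bcircV, circ, Matrix.mul_apply, Matrix.of_apply, Finset.sum_apply,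
    Pi.smul_apply, smul_eq_mul]
  exact Fintype.sum_equiv (Equiv.addRight k) _ _ fun t => by
    simp only [Equiv.coe_addRight]
    have h1 : j - k - t = j - (t + k) := by abel
    have h2 : t + k - k = t := by abel
    rw [h1, h2, mul_comm]

lemma circ_xHx {n p : ℕ} (X : Fin p → Fin n → ℂ) :
    circ p (xHx X) = (bcircV X)ᴴ * bcircV X := by
  ext j k
  haveI : NeZero p := ⟨(Fin.pos j).ne'⟩
  simp only [circ, xHx, xHy, bcircV, Matrix.mul_apply, Matrix.conjTranspose_apply,
    Matrix.of_apply, dotProduct, Pi.star_apply, Fintype.sum_prod_type]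
  exact Fintype.sum_equiv (Equiv.addRight k) _ _ fun m => by
    simp only [Equiv.coe_addRight]
    have h1 : m - (j - k) = m + k - j := by abel
    have h2 : m + k - k = m := by abel
    rw [h1, h2]

lemma bcircV_inj {n p : ℕ} {X Y : Fin p → Fin n → ℂ} (h : bcircV X = bcircV Y) : X = Y := by
  funext i r
  haveI : NeZero p := ⟨(Fin.pos i).ne'⟩
  have := congrFun (congrFun h (i, r)) 0
  simpa [bcircV] using this

lemma mulVec_inj_of_isUnit_gram {m' n' : Type*} [Fintype m'] [Fintype n'] [DecidableEq n']
    {x : Matrix m' n' ℂ} (h : IsUnit (xᴴ * x)) : Function.Injective x.mulVec := by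
  intro v w e
  have := Matrix.mulVec_injective_iff_isUnit.mpr h
  apply this
  rw [← Matrix.mulVec_mulVec, ← Matrix.mulVec_mulVec, e]

lemma isUnit_gram_of_mulVec_inj {m' n' : Type*} [Fintype m'] [Fintype n'] [DecidableEq n']
    {x : Matrix m' n' ℂ} (h : Function.Injective x.mulVec) : IsUnit (xᴴ * x) := by
  rw [← Matrix.mulVec_injective_iff_isUnit]
  intro v w e
  have key : ∀ u, (xᴴ * x) *ᵥ u = 0 → u = 0 := by
    intro u hu
    have h0 : star u ⬝ᵥ ((xᴴ * x) *ᵥ u) = 0 := by rw [hu, dotProduct_zero]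
    rw [← Matrix.mulVec_mulVec, Matrix.dotProduct_mulVec, ← Matrix.star_mulVec,
      dotProduct_star_self_eq_zero] at h0
    have h1 : x *ᵥ u = x *ᵥ 0 := by rw [Matrix.mulVec_zero]; exact h0
    exact h h1
  have := key (v - w) (by rw [Matrix.mulVec_sub, e, sub_self])
  exact sub_eq_zero.mp this

lemma tubEig_swap {n p : ℕ} (A B : Fin p → Matrix (Fin n) (Fin n) ℂ) (lam : Fin p → ℂ)
    (hl : IsUnit (circ p lam)) (h : IsTubEig (tmul A B) lam) : IsTubEig (tmul B A) lam := by
  obtain ⟨X, hX, hG⟩ := h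
  set x := bcircV X with hx
  have hmat : bcirc A * bcirc B * x = x * circ p lam := by
    have h0 : bcircV (tmulV (tmul A B) X) = bcircV (fun i => ∑ t, lam t • X (i - t)) :=
      congrArg bcircV (funext fun i => hX i)
    rw [bcircV_tmulV, bcircV_smul, bcirc_tmul] at h0
    exact h0
  have xinj : Function.Injective x.mulVec :=
    mulVec_inj_of_isUnit_gram (by rw [← circ_xHx]; exact hG)
  have Linj : Function.Injective (circ p lam).mulVec :=
    Matrix.mulVec_injective_iff_isUnit.mpr hl
  have yinj : Function.Injective (bcirc B * x).mulVec := by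
    intro v w e
    have e' : (bcirc B * x) *ᵥ (v - w) = 0 := by rw [Matrix.mulVec_sub, e, sub_self]
    have h1 : x *ᵥ ((circ p lam) *ᵥ (v - w)) = 0 := by
      rw [Matrix.mulVec_mulVec, ← hmat, Matrix.mul_assoc, ← Matrix.mulVec_mulVec, e',
        Matrix.mulVec_zero]
    have h2 : circ p lam *ᵥ (v - w) = 0 := xinj (by rw [h1, Matrix.mulVec_zero])
    have h3 : v - w = 0 := Linj (by rw [h2, Matrix.mulVec_zero])
    exact sub_eq_zero.mp h3
  refine ⟨tmulV B X, ?_, ?_⟩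
  · intro i
    have hy : bcircV (tmulV (tmul B A) (tmulV B X)) =
        bcircV (fun i => ∑ t, lam t • tmulV B X (i - t)) := by
      rw [bcircV_tmulV, bcircV_smul, bcirc_tmul, bcircV_tmulV, ← hx]
      calc bcirc B * bcirc A * (bcirc B * x)
          = bcirc B * (bcirc A * bcirc B * x) := by
            simp only [Matrix.mul_assoc]
        _ = bcirc B * (x * circ p lam) := by rw [hmat]
        _ = bcirc B * x * circ p lam := by rw [Matrix.mul_assoc]
    exact congrFun (bcircV_inj hy) i
  · rw [circ_xHx, bcircV_tmulV, ← hx]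
    exact isUnit_gram_of_mulVec_inj yinj

/-- the invertible tubular spectra of `𝒜*ℬ` and `ℬ*𝒜` coincide. -/
theorem inv_tubular_spectrum_tmul_comm (n p : ℕ) (A B : Fin p → Matrix (Fin n) (Fin n) ℂ) :
    {lam : Fin p → ℂ | IsUnit (circ p lam) ∧ IsTubEig (tmul A B) lam} =
    {lam : Fin p → ℂ | IsUnit (circ p lam) ∧ IsTubEig (tmul B A) lam} := by
  ext lam
  simp only [Set.mem_setOf_eq]
  constructor <;> rintro ⟨h1, h2⟩
  · exact ⟨h1, tubEig_swap A B lam h1 h2⟩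
  · exact ⟨h1, tubEig_swap B A lam h1 h2⟩
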